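/- Consider the linear ODE system w'(t) = Φ u(t), u'(t) = −K w(t) − (f/Φ) A u(t) on ℝⁿ × ℝⁿ, where Φ > 0, K is symmetric, and A is skew-symmetric. Then the energy H(u,w) = ½ Φ uᵀu + ½ wᵀ K w is constant along every differentiable solution. -/

import Mathlib

/-!
Along a solution, the derivative of the energy is `Φ u ⬝ᵥ u' + w' ⬝ᵥ K w` (using `Kᵀ = K`), which
equals `-Φ u ⬝ᵥ K w - f u ⬝ᵥ A u + Φ u ⬝ᵥ K w`. The coupling terms cancel and `u ⬝ᵥ A u = 0` since
`A` is skew-symmetric, so the energy has zero derivative everywhere and is therefore constant.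
-/

open Matrix

section

variable {ι : Type*} [Fintype ι]

theorem dotProduct_mulVec_comm_of_transpose_eq {R : Type*} [CommSemiring R] {M : Matrix ι ι R}
    (hM : Mᵀ = M) (x y : ι → R) : x ⬝ᵥ M *ᵥ y = y ⬝ᵥ M *ᵥ x := by
  rw [dotProduct_mulVec, ← mulVec_transpose, hM, dotProduct_comm]

theorem dotProduct_mulVec_self_eq_zero_of_transpose_eq_neg {R : Type*} [CommRing R]
    [IsAddTorsionFree R] {M : Matrix ι ι R} (hM : Mᵀ = -M) (x : ι → R) : x ⬝ᵥ M *ᵥ x = 0 := by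
  have : x ⬝ᵥ M *ᵥ x = -(x ⬝ᵥ M *ᵥ x) := by
    conv_lhs => rw [dotProduct_mulVec, ← mulVec_transpose, hM, dotProduct_comm]
    rw [neg_mulVec, dotProduct_neg]
  exact self_eq_neg.mp this

variable {𝕜 : Type*} [NontriviallyNormedField 𝕜] {t : 𝕜}

theorem HasDerivAt.ofLp {p : ENNReal} [Fact (1 ≤ p)] {E : ι → Type*}
    [∀ i, NormedAddCommGroup (E i)] [∀ i, NormedSpace 𝕜 (E i)] {f : 𝕜 → PiLp p E}
    {f' : PiLp p E} (hf : HasDerivAt f f' t) : HasDerivAt (fun s => (f s : ∀ i, E i)) f' t :=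
  (PiLp.hasFDerivAt_ofLp p (f t)).comp_hasDerivAt t hf

theorem HasDerivAt.dotProduct {u v : 𝕜 → ι → 𝕜} {u' v' : ι → 𝕜} (hu : HasDerivAt u u' t)
    (hv : HasDerivAt v v' t) : HasDerivAt (fun s => u s ⬝ᵥ v s) (u' ⬝ᵥ v t + u t ⬝ᵥ v') t := by
  rw [hasDerivAt_pi] at hu hv
  unfold _root_.dotProduct
  rw [← Finset.sum_add_distrib]
  exact HasDerivAt.fun_sum fun i _ => (hu i).mul (hv i)

theorem HasDerivAt.mulVec {m : Type*} [Fintype m] (M : Matrix m ι 𝕜) {v : 𝕜 → ι → 𝕜}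
    {v' : ι → 𝕜} (hv : HasDerivAt v v' t) : HasDerivAt (fun s => M *ᵥ v s) (M *ᵥ v') t :=
  hasDerivAt_pi.mpr fun i => by
    have := (hasDerivAt_const t (M i)).dotProduct hv
    rw [zero_dotProduct, zero_add] at this
    exact this

theorem HasDerivAt.dotProduct_mulVec_self {M : Matrix ι ι 𝕜} (hM : Mᵀ = M) {v : 𝕜 → ι → 𝕜}
    {v' : ι → 𝕜} (hv : HasDerivAt v v' t) :
    HasDerivAt (fun s => v s ⬝ᵥ M *ᵥ v s) (2 * (v' ⬝ᵥ M *ᵥ v t)) t := by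
  convert hv.dotProduct (hv.mulVec M) using 1
  rw [dotProduct_mulVec_comm_of_transpose_eq hM (v t), two_mul]

end

theorem hdg_energy_conserved_general {n : ℕ} (K A : Matrix (Fin n) (Fin n) ℝ)
    (hK : K.transpose = K) (hA : A.transpose = -A) (Φ f : ℝ)
    (u w : ℝ → EuclideanSpace ℝ (Fin n))
    (hw : ∀ t : ℝ, HasDerivAt w (Φ • u t) t)
    (hu : ∀ t : ℝ, HasDerivAt u ((WithLp.toLp 2 (-(K.mulVec (w t))) : EuclideanSpace ℝ (Fin n)) - (f / Φ) • (WithLp.toLp 2 (A.mulVec (u t)) : EuclideanSpace ℝ (Fin n))) t) :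
    ∀ t : ℝ,
      (1 / 2 : ℝ) * Φ * (u t ⬝ᵥ u t) + (1 / 2 : ℝ) * (w t ⬝ᵥ K.mulVec (w t))
        = (1 / 2 : ℝ) * Φ * (u 0 ⬝ᵥ u 0) + (1 / 2 : ℝ) * (w 0 ⬝ᵥ K.mulVec (w 0)) := by
  have henergy : ∀ t, HasDerivAt (fun s => (1 / 2 : ℝ) * Φ * (u s ⬝ᵥ u s)
      + (1 / 2 : ℝ) * (w s ⬝ᵥ K.mulVec (w s))) 0 t := by
    intro t
    have hu' := (hu t).ofLp
    refine (((hu'.dotProduct hu').const_mul (1 / 2 * Φ)).add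
      (((hw t).ofLp.dotProduct_mulVec_self hK).const_mul (1 / 2))).congr_deriv ?_
    simp only [WithLp.ofLp_sub, WithLp.ofLp_smul, sub_dotProduct, dotProduct_sub, neg_dotProduct,
      dotProduct_neg, smul_dotProduct, dotProduct_smul, smul_eq_mul,
      dotProduct_mulVec_self_eq_zero_of_transpose_eq_neg hA,
      dotProduct_comm (A *ᵥ _), dotProduct_comm (K *ᵥ _)]
    ring
  intro t
  exact is_const_of_deriv_eq_zero (fun s => (henergy s).differentiableAt)
    (fun s => (henergy s).deriv) t 0

theorem hdg_energy_conserved {n : ℕ} (K A : Matrix (Fin n) (Fin n) ℝ)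
    (hK : K.transpose = K) (hA : A.transpose = -A) (Φ f : ℝ) (hΦ : 0 < Φ)
    (u w : ℝ → EuclideanSpace ℝ (Fin n))
    (hw : ∀ t : ℝ, HasDerivAt w (Φ • u t) t)
    (hu : ∀ t : ℝ, HasDerivAt u ((WithLp.toLp 2 (-(K.mulVec (w t))) : EuclideanSpace ℝ (Fin n)) - (f / Φ) • (WithLp.toLp 2 (A.mulVec (u t)) : EuclideanSpace ℝ (Fin n))) t) :
    ∀ t : ℝ,
      (1 / 2 : ℝ) * Φ * (u t ⬝ᵥ u t) + (1 / 2 : ℝ) * (w t ⬝ᵥ K.mulVec (w t))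
        = (1 / 2 : ℝ) * Φ * (u 0 ⬝ᵥ u 0) + (1 / 2 : ℝ) * (w 0 ⬝ᵥ K.mulVec (w 0)) :=
  hdg_energy_conserved_general K A hK hA Φ f u w hw hu
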